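/- In the ADMM context, suppose F is ξ-monotone on C_= with constants c > 0 and ξ > 1, i.e., ⟪F x − F x', x − x'⟫ ≥ c‖x − x'‖^ξ for all x, x' ∈ C_=. Let (x^μ, λ^μ) be a KKT point with y^μ = x^μ, let (x_k)_{k≥1}, (y_k)_{k≥0}, (λ_k)_{k≥0} be an ADMM trajectory, and set Δ = (1/β)‖λ_0 − λ^μ‖² + β‖y_0 − y^μ‖². Then for every K ≥ 0: (i) the average iterate x̂_{K+1} = (1/(K+1))·Σ_{k=1}^{K+1} x_k satisfies c‖x̂_{K+1} − x^μ‖^ξ ≤ Δ/(K+1); and (ii) the last iterate satisfies c‖x_{K+1} − x^μ‖^ξ ≤ Δ/(K+1) + 2Δ/√(K+1). -/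

import Mathlib

open scoped RealInnerProductSpace

/-- The affine constraint set `C_= = {x | C x = d}`. -/
def CeqSet {n p : ℕ} (C : Matrix (Fin p) (Fin n) ℝ) (d : EuclideanSpace ℝ (Fin p)) :
    Set (EuclideanSpace ℝ (Fin n)) :=
  {x | Matrix.toEuclideanLin C x = d}

/-- `F` is monotone on the set `S`. -/
def MonotoneOnSet {n : ℕ} (F : EuclideanSpace ℝ (Fin n) → EuclideanSpace ℝ (Fin n))
    (S : Set (EuclideanSpace ℝ (Fin n))) : Prop :=
  ∀ x ∈ S, ∀ x' ∈ S, 0 ≤ ⟪F x - F x', x - x'⟫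

/-- A KKT point `(x^μ, λ^μ)`: `x^μ ∈ C_=`, `⟪F x^μ + λ^μ, z − x^μ⟫ ≥ 0` for all `z ∈ C_=`,
and `λ^μ` is a subgradient of `g` at `x^μ`. -/
def IsKKTPoint {n : ℕ} (F : EuclideanSpace ℝ (Fin n) → EuclideanSpace ℝ (Fin n))
    (g : EuclideanSpace ℝ (Fin n) → ℝ) (S : Set (EuclideanSpace ℝ (Fin n)))
    (xμ lamμ : EuclideanSpace ℝ (Fin n)) : Prop :=
  xμ ∈ S ∧ (∀ z ∈ S, 0 ≤ ⟪F xμ + lamμ, z - xμ⟫) ∧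
    (∀ z, g xμ + ⟪lamμ, z - xμ⟫ ≤ g z)

/-- An ADMM step from `(y_k, λ_k)` to `(x_{k+1}, y_{k+1}, λ_{k+1})`. -/
def IsADMMStep {n : ℕ} (F : EuclideanSpace ℝ (Fin n) → EuclideanSpace ℝ (Fin n))
    (g : EuclideanSpace ℝ (Fin n) → ℝ) (β : ℝ) (S : Set (EuclideanSpace ℝ (Fin n)))
    (yk lamk xk1 yk1 lamk1 : EuclideanSpace ℝ (Fin n)) : Prop :=
  xk1 ∈ S ∧
  (∀ z ∈ S, 0 ≤ ⟪F xk1 + lamk + β • (xk1 - yk), z - xk1⟫) ∧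
  (∀ z, g yk1 + ⟪lamk1, z - yk1⟫ ≤ g z) ∧
  lamk1 = lamk + β • (xk1 - yk1)

/-- An ADMM trajectory: sequences `x, y, λ` whose consecutive entries are related by ADMM
steps, with the subgradient property at the initial point `y_0`. -/
def IsADMMTraj {n : ℕ} (F : EuclideanSpace ℝ (Fin n) → EuclideanSpace ℝ (Fin n))
    (g : EuclideanSpace ℝ (Fin n) → ℝ) (β : ℝ) (S : Set (EuclideanSpace ℝ (Fin n)))
    (x y lam : ℕ → EuclideanSpace ℝ (Fin n)) : Prop :=
  (∀ k, IsADMMStep F g β S (y k) (lam k) (x (k+1)) (y (k+1)) (lam (k+1))) ∧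
  (∀ z, g (y 0) + ⟪lam 0, z - y 0⟫ ≤ g z)

/-!
In the pairs `(λ, β • y)` with the `L²` distance, ADMM is Fejér monotone with respect to the
KKT pair: adding the two variational inequalities of the `x`-steps and using monotonicity of the
subdifferential of `g` shows that one step decreases the squared distance by at least
`2β ⟪F xₖ₊₁ - F x^μ, xₖ₊₁ - x^μ⟫` plus the squared length of the step. Telescoping bounds the
sum of these gaps, and Jensen's inequality turns this into the average-iterate rate. Applying the
same inequality to two consecutive steps shows, by monotonicity of `F`, that the step lengths do
not increase, so the `K`-th one is `O(1/√K)`; by the triangle inequality the drop of the distance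
at step `K`, which dominates the `K`-th gap, is at most that step length times twice the initial
distance.
-/

open Finset

section Fejer

variable {X : Type*} [PseudoMetricSpace X]

lemma sq_dist_sub_sq_dist_le (x y z : X) :
    dist x z ^ 2 - dist y z ^ 2 ≤ dist x y * (dist x z + dist y z) := by
  have h : dist x z - dist y z ≤ dist x y := by linarith [dist_triangle x y z]
  nlinarith [mul_le_mul_of_nonneg_right h (add_nonneg (dist_nonneg (x := x) (y := z))
    (dist_nonneg (x := y) (y := z)))]

def IsFejerWithGain (P : ℕ → X) (p : X) (b : ℕ → ℝ) : Prop :=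
  ∀ k, b k + dist (P (k + 1)) (P k) ^ 2 + dist (P (k + 1)) p ^ 2 ≤ dist (P k) p ^ 2

variable {P : ℕ → X} {p : X} {b : ℕ → ℝ}

lemma IsFejerWithGain.sum_add_sq_dist_le (hstep : IsFejerWithGain P p b) (K : ℕ) :
    ∑ k ∈ range K, (b k + dist (P (k + 1)) (P k) ^ 2) ≤ dist (P 0) p ^ 2 :=
  calc ∑ k ∈ range K, (b k + dist (P (k + 1)) (P k) ^ 2)
      ≤ ∑ k ∈ range K, (dist (P k) p ^ 2 - dist (P (k + 1)) p ^ 2) :=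
        sum_le_sum fun k _ => by linarith [hstep k]
    _ = dist (P 0) p ^ 2 - dist (P K) p ^ 2 := sum_range_sub' _ K
    _ ≤ dist (P 0) p ^ 2 := sub_le_self _ (sq_nonneg _)

lemma IsFejerWithGain.sum_le (hstep : IsFejerWithGain P p b) (K : ℕ) :
    ∑ k ∈ range K, b k ≤ dist (P 0) p ^ 2 :=
  (sum_le_sum fun k _ => le_add_of_nonneg_right (sq_nonneg (dist (P (k + 1)) (P k)))).trans
    (hstep.sum_add_sq_dist_le K)

lemma IsFejerWithGain.dist_le (hstep : IsFejerWithGain P p b) (hb : ∀ k, 0 ≤ b k) (k : ℕ) :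
    dist (P k) p ≤ dist (P 0) p := by
  have hanti : Antitone fun k => dist (P k) p ^ 2 := antitone_nat_of_succ_le fun k => by
    nlinarith [hb k, hstep k, sq_nonneg (dist (P (k + 1)) (P k))]
  exact (pow_le_pow_iff_left₀ dist_nonneg dist_nonneg two_ne_zero).mp (hanti k.zero_le)

lemma IsFejerWithGain.mul_sq_dist_succ_le (hstep : IsFejerWithGain P p b) (hb : ∀ k, 0 ≤ b k)
    (hres : ∀ k, dist (P (k + 2)) (P (k + 1)) ^ 2 ≤ dist (P (k + 1)) (P k) ^ 2) (K : ℕ) :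
    (K + 1) * dist (P (K + 1)) (P K) ^ 2 ≤ dist (P 0) p ^ 2 := by
  have hanti : Antitone fun k => dist (P (k + 1)) (P k) ^ 2 := antitone_nat_of_succ_le hres
  calc (K + 1) * dist (P (K + 1)) (P K) ^ 2
      = ∑ _k ∈ range (K + 1), dist (P (K + 1)) (P K) ^ 2 := by simp
    _ ≤ ∑ k ∈ range (K + 1), (b k + dist (P (k + 1)) (P k) ^ 2) :=
        sum_le_sum fun k hk => le_add_of_nonneg_of_le (hb k)
          (hanti (Nat.lt_succ_iff.mp (mem_range.mp hk)))
    _ ≤ dist (P 0) p ^ 2 := hstep.sum_add_sq_dist_le _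

lemma IsFejerWithGain.le_div_sqrt (hstep : IsFejerWithGain P p b) (hb : ∀ k, 0 ≤ b k)
    (hres : ∀ k, dist (P (k + 2)) (P (k + 1)) ^ 2 ≤ dist (P (k + 1)) (P k) ^ 2) (K : ℕ) :
    b K ≤ 2 * dist (P 0) p ^ 2 / √(K + 1) := by
  set r := dist (P (K + 1)) (P K)
  set d₀ := dist (P 0) p
  have hK : (0 : ℝ) < √(K + 1) := Real.sqrt_pos.mpr (by positivity)
  have hr : r * √(K + 1) ≤ d₀ := by
    refine (pow_le_pow_iff_left₀ (by positivity) dist_nonneg two_ne_zero).mp ?_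
    rw [mul_pow, Real.sq_sqrt (by positivity), mul_comm]
    exact hstep.mul_sq_dist_succ_le hb hres K
  have hbK : b K ≤ r * (2 * d₀) :=
    calc b K ≤ dist (P K) p ^ 2 - dist (P (K + 1)) p ^ 2 := by
          nlinarith [hstep K, sq_nonneg r]
      _ ≤ r * (dist (P K) p + dist (P (K + 1)) p) := by
          simpa only [r, dist_comm (P K)] using sq_dist_sub_sq_dist_le (P K) (P (K + 1)) p
      _ ≤ r * (2 * d₀) := by
          gcongr; linarith [hstep.dist_le hb K, hstep.dist_le hb (K + 1)]
  rw [le_div_iff₀ hK]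
  nlinarith [dist_nonneg (x := P 0) (y := p)]

end Fejer

section InnerProductSpace

variable {E : Type*} [NormedAddCommGroup E] [InnerProductSpace ℝ E]

lemma inner_sub_sub_nonneg_of_subgradient {g : E → ℝ} {u v q r : E}
    (hq : ∀ z, g u + ⟪q, z - u⟫ ≤ g z) (hr : ∀ z, g v + ⟪r, z - v⟫ ≤ g z) :
    0 ≤ ⟪q - r, u - v⟫ := by
  have h : ⟪q - r, u - v⟫ = -(⟪q, v - u⟫ + ⟪r, u - v⟫) := by
    simp only [inner_sub_left, inner_sub_right]; ring
  linarith [hq v, hr u]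

lemma norm_sq_add_sq_mul_norm_sq_le {β : ℝ} (hβ : 0 ≤ β) {u v : E} (h : 0 ≤ ⟪u, v⟫) :
    ‖u‖ ^ 2 + β ^ 2 * ‖v‖ ^ 2 ≤ ‖u + β • v‖ ^ 2 := by
  rw [norm_add_sq_real, norm_smul, real_inner_smul_right, Real.norm_of_nonneg hβ, mul_pow]
  nlinarith [mul_nonneg hβ h]

/-- The one-step energy inequality of ADMM for differences of two runs: `a`, `b`, `c`, `e`
stand for the differences of `λₖ`, `xₖ₊₁`, `yₖ`, `yₖ₊₁`, and `a + β • (b - e)` for that of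
`λₖ₊₁`. -/
lemma admm_energy_le {β m : ℝ} (hβ : 0 ≤ β) {a b c e : E}
    (hVI : m + ⟪a + β • (b - c), b⟫ ≤ 0) (hcross : 0 ≤ ⟪a + β • (b - e), e⟫) :
    2 * β * m + β ^ 2 * ‖b - c‖ ^ 2 + (‖a + β • (b - e)‖ ^ 2 + β ^ 2 * ‖e‖ ^ 2) ≤
      ‖a‖ ^ 2 + β ^ 2 * ‖c‖ ^ 2 := by
  have key : 2 * β * ⟪a + β • (b - c), b⟫ =
      2 * β * ⟪a + β • (b - e), e⟫ + ‖a + β • (b - e)‖ ^ 2 + β ^ 2 * ‖e‖ ^ 2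
        - ‖a‖ ^ 2 - β ^ 2 * ‖c‖ ^ 2 + β ^ 2 * ‖b - c‖ ^ 2 := by
    simp only [← real_inner_self_eq_norm_sq, inner_add_left, inner_add_right,
      inner_sub_left, inner_sub_right, real_inner_smul_left, real_inner_smul_right]
    linear_combination β * real_inner_comm a e + β ^ 2 * real_inner_comm b e
      - β * real_inner_comm a b - β ^ 2 * real_inner_comm b c
  nlinarith [mul_nonneg hβ hcross]

def admmState (β : ℝ) (l y : E) : WithLp 2 (E × E) := WithLp.toLp 2 (l, β • y)

lemma dist_admmState_sq (β : ℝ) (l y l' y' : E) :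
    dist (admmState β l y) (admmState β l' y') ^ 2 = ‖l - l'‖ ^ 2 + β ^ 2 * ‖y - y'‖ ^ 2 := by
  rw [dist_eq_norm, admmState, admmState, ← WithLp.toLp_sub, WithLp.prod_norm_sq_eq_of_L2]
  simp [← smul_sub, norm_smul, mul_pow]

end InnerProductSpace

lemma norm_average_sub_rpow_le {E ι : Type*} [SeminormedAddCommGroup E] [NormedSpace ℝ E]
    {s : Finset ι} (hs : s.Nonempty) (x : ι → E) (z : E) {ξ : ℝ} (hξ : 1 ≤ ξ) :
    ‖(#s : ℝ)⁻¹ • ∑ i ∈ s, x i - z‖ ^ ξ ≤ (#s : ℝ)⁻¹ * ∑ i ∈ s, ‖x i - z‖ ^ ξ := by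
  have hw₀ : ∀ i ∈ s, (0 : ℝ) ≤ (#s : ℝ)⁻¹ := fun _ _ => by positivity
  have hw₁ : ∑ _i ∈ s, (#s : ℝ)⁻¹ = 1 := by
    rw [sum_const, nsmul_eq_mul, mul_inv_cancel₀ (by simpa using hs.ne_empty)]
  have hdist : ‖(#s : ℝ)⁻¹ • ∑ i ∈ s, x i - z‖ ≤ ∑ i ∈ s, (#s : ℝ)⁻¹ * ‖x i - z‖ := by
    simpa [smul_sum, dist_eq_norm] using
      (convexOn_univ_dist z).map_sum_le hw₀ hw₁ (p := x) fun _ _ => Set.mem_univ _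
  calc ‖(#s : ℝ)⁻¹ • ∑ i ∈ s, x i - z‖ ^ ξ
      ≤ (∑ i ∈ s, (#s : ℝ)⁻¹ * ‖x i - z‖) ^ ξ :=
        Real.rpow_le_rpow (norm_nonneg _) hdist (by linarith)
    _ ≤ ∑ i ∈ s, (#s : ℝ)⁻¹ * ‖x i - z‖ ^ ξ :=
        Real.rpow_arith_mean_le_arith_mean_rpow s _ _ hw₀ hw₁ (fun _ _ => norm_nonneg _) hξ
    _ = (#s : ℝ)⁻¹ * ∑ i ∈ s, ‖x i - z‖ ^ ξ := (mul_sum _ _ _).symm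

section ADMM

variable {n : ℕ} {F : EuclideanSpace ℝ (Fin n) → EuclideanSpace ℝ (Fin n)}
  {g : EuclideanSpace ℝ (Fin n) → ℝ} {β : ℝ} {S : Set (EuclideanSpace ℝ (Fin n))}

lemma IsKKTPoint.isADMMStep {xμ lamμ : EuclideanSpace ℝ (Fin n)}
    (h : IsKKTPoint F g S xμ lamμ) : IsADMMStep F g β S xμ lamμ xμ xμ lamμ := by
  obtain ⟨hxμ, hVI, hsub⟩ := h
  exact ⟨hxμ, by simpa using hVI, hsub, by simp⟩

lemma IsADMMStep.sq_dist_admmState_le (hβ : 0 ≤ β)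
    {y₁ l₁ x₁ y₁' l₁' y₂ l₂ x₂ y₂' l₂' : EuclideanSpace ℝ (Fin n)}
    (h₁ : IsADMMStep F g β S y₁ l₁ x₁ y₁' l₁') (h₂ : IsADMMStep F g β S y₂ l₂ x₂ y₂' l₂') :
    2 * β * ⟪F x₁ - F x₂, x₁ - x₂⟫ + β ^ 2 * ‖(x₁ - x₂) - (y₁ - y₂)‖ ^ 2 +
        dist (admmState β l₁' y₁') (admmState β l₂' y₂') ^ 2 ≤
      dist (admmState β l₁ y₁) (admmState β l₂ y₂) ^ 2 := by
  obtain ⟨hx₁, hVI₁, hsub₁, rfl⟩ := h₁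
  obtain ⟨hx₂, hVI₂, hsub₂, rfl⟩ := h₂
  have hVI : ⟪F x₁ - F x₂, x₁ - x₂⟫ + ⟪(l₁ - l₂) + β • ((x₁ - x₂) - (y₁ - y₂)), x₁ - x₂⟫ ≤ 0 := by
    have := add_nonneg (hVI₁ x₂ hx₂) (hVI₂ x₁ hx₁)
    simp only [inner_add_left, inner_sub_left, inner_sub_right, real_inner_smul_left] at this ⊢
    linarith
  have hdual : l₁ + β • (x₁ - y₁') - (l₂ + β • (x₂ - y₂')) =
      (l₁ - l₂) + β • ((x₁ - x₂) - (y₁' - y₂')) := by module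
  have hcross := inner_sub_sub_nonneg_of_subgradient hsub₁ hsub₂
  rw [hdual] at hcross
  rw [dist_admmState_sq, dist_admmState_sq, hdual]
  exact admm_energy_le hβ hVI hcross

lemma IsADMMStep.sq_dist_admmState_le_of_subgradient (hβ : 0 ≤ β)
    {y l x y' l' : EuclideanSpace ℝ (Fin n)} (h : IsADMMStep F g β S y l x y' l')
    (hg : ∀ z, g y + ⟪l, z - y⟫ ≤ g z) :
    dist (admmState β l' y') (admmState β l y) ^ 2 ≤ β ^ 2 * ‖x - y‖ ^ 2 := by
  obtain ⟨-, -, hsub, rfl⟩ := h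
  calc dist (admmState β (l + β • (x - y')) y') (admmState β l y) ^ 2
      = ‖l + β • (x - y') - l‖ ^ 2 + β ^ 2 * ‖y' - y‖ ^ 2 := dist_admmState_sq ..
    _ ≤ ‖(l + β • (x - y') - l) + β • (y' - y)‖ ^ 2 :=
        norm_sq_add_sq_mul_norm_sq_le hβ (inner_sub_sub_nonneg_of_subgradient hsub hg)
    _ = ‖β • (x - y)‖ ^ 2 := by congr 2; module
    _ = β ^ 2 * ‖x - y‖ ^ 2 := by rw [norm_smul, Real.norm_of_nonneg hβ, mul_pow]

namespace IsADMMTraj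

variable {x y lam : ℕ → EuclideanSpace ℝ (Fin n)}

lemma subgradient (h : IsADMMTraj F g β S x y lam) :
    ∀ k z, g (y k) + ⟪lam k, z - y k⟫ ≤ g z
  | 0 => h.2
  | k + 1 => (h.1 k).2.2.1

lemma isFejerWithGain (h : IsADMMTraj F g β S x y lam) (hβ : 0 ≤ β)
    {xμ lamμ : EuclideanSpace ℝ (Fin n)} (hKKT : IsKKTPoint F g S xμ lamμ) :
    IsFejerWithGain (fun k => admmState β (lam k) (y k)) (admmState β lamμ xμ)
      (fun k => 2 * β * ⟪F (x (k + 1)) - F xμ, x (k + 1) - xμ⟫) := by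
  intro k
  have hdecr := (h.1 k).sq_dist_admmState_le hβ (hKKT.isADMMStep (β := β))
  have hres := (h.1 k).sq_dist_admmState_le_of_subgradient hβ (h.subgradient k)
  rw [sub_sub_sub_cancel_right] at hdecr
  linarith

lemma sq_dist_admmState_succ_le (h : IsADMMTraj F g β S x y lam) (hβ : 0 ≤ β)
    (hF : MonotoneOnSet F S) (k : ℕ) :
    dist (admmState β (lam (k + 2)) (y (k + 2))) (admmState β (lam (k + 1)) (y (k + 1))) ^ 2 ≤
      dist (admmState β (lam (k + 1)) (y (k + 1))) (admmState β (lam k) (y k)) ^ 2 := by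
  have hdecr := (h.1 (k + 1)).sq_dist_admmState_le hβ (h.1 k)
  have hmono := hF _ (h.1 (k + 1)).1 _ (h.1 k).1
  nlinarith [sq_nonneg ‖(x (k + 2) - x (k + 1)) - (y (k + 1) - y k)‖]

lemma sum_inner_le (h : IsADMMTraj F g β S x y lam) (hβ : 0 ≤ β)
    {xμ lamμ : EuclideanSpace ℝ (Fin n)} (hKKT : IsKKTPoint F g S xμ lamμ) (K : ℕ) :
    2 * β * ∑ k ∈ range K, ⟪F (x (k + 1)) - F xμ, x (k + 1) - xμ⟫ ≤
      dist (admmState β (lam 0) (y 0)) (admmState β lamμ xμ) ^ 2 := by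
  rw [mul_sum]
  exact (h.isFejerWithGain hβ hKKT).sum_le K

lemma inner_le_div_sqrt (h : IsADMMTraj F g β S x y lam) (hβ : 0 ≤ β)
    (hF : MonotoneOnSet F S) {xμ lamμ : EuclideanSpace ℝ (Fin n)}
    (hKKT : IsKKTPoint F g S xμ lamμ) (K : ℕ) :
    2 * β * ⟪F (x (K + 1)) - F xμ, x (K + 1) - xμ⟫ ≤
      2 * dist (admmState β (lam 0) (y 0)) (admmState β lamμ xμ) ^ 2 / √(K + 1) :=
  (h.isFejerWithGain hβ hKKT).le_div_sqrt
    (fun k => mul_nonneg (by positivity) (hF _ (h.1 k).1 _ hKKT.1))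
    (h.sq_dist_admmState_succ_le hβ hF) K

end IsADMMTraj

end ADMM

/-- Theorem 3.2 under ξ-monotonicity: average and last iterate rates. -/
theorem stmt_14 {n p : ℕ} (C : Matrix (Fin p) (Fin n) ℝ) (d : EuclideanSpace ℝ (Fin p))
    (F : EuclideanSpace ℝ (Fin n) → EuclideanSpace ℝ (Fin n))
    (g : EuclideanSpace ℝ (Fin n) → ℝ) (β : ℝ) (hβ : 0 < β)
    (c ξ : ℝ) (hc : 0 < c) (hξ : 1 < ξ)
    (hF : ∀ x' ∈ CeqSet C d, ∀ x'' ∈ CeqSet C d,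
      c * ‖x' - x''‖ ^ ξ ≤ ⟪F x' - F x'', x' - x''⟫)
    (xμ yμ lamμ : EuclideanSpace ℝ (Fin n))
    (hKKT : IsKKTPoint F g (CeqSet C d) xμ lamμ) (hyμ : yμ = xμ)
    (x y lam : ℕ → EuclideanSpace ℝ (Fin n))
    (htraj : IsADMMTraj F g β (CeqSet C d) x y lam)
    (Δ : ℝ) (hΔ : Δ = (1 / β) * ‖lam 0 - lamμ‖ ^ 2 + β * ‖y 0 - yμ‖ ^ 2) :
    ∀ K : ℕ,
      c * ‖(((K : ℝ) + 1)⁻¹ • ∑ k ∈ Finset.range (K+1), x (k+1)) - xμ‖ ^ ξ ≤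
          Δ / (K + 1) ∧
      c * ‖x (K+1) - xμ‖ ^ ξ ≤ Δ / (K + 1) + 2 * Δ / Real.sqrt (K + 1) := by
  rw [hyμ] at hΔ
  have hgap (k : ℕ) : c * ‖x (k + 1) - xμ‖ ^ ξ ≤ ⟪F (x (k + 1)) - F xμ, x (k + 1) - xμ⟫ :=
    hF _ (htraj.1 k).1 _ hKKT.1
  have hmono : MonotoneOnSet F (CeqSet C d) := fun x' hx' x'' hx'' =>
    (by positivity : 0 ≤ c * ‖x' - x''‖ ^ ξ).trans (hF x' hx' x'' hx'')
  have hD : dist (admmState β (lam 0) (y 0)) (admmState β lamμ xμ) ^ 2 = β * Δ := by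
    rw [dist_admmState_sq, hΔ]; field_simp
  have hΔ₀ : 0 ≤ Δ := by
    nlinarith [sq_nonneg (dist (admmState β (lam 0) (y 0)) (admmState β lamμ xμ))]
  intro K
  have hK : (0 : ℝ) < K + 1 := by positivity
  constructor
  · have hsum := hD ▸ htraj.sum_inner_le hβ.le hKKT (K + 1)
    have hjensen := norm_average_sub_rpow_le (nonempty_range_add_one (n := K))
      (fun k => x (k + 1)) xμ hξ.le
    rw [card_range, Nat.cast_add_one] at hjensen
    calc c * ‖((K : ℝ) + 1)⁻¹ • ∑ k ∈ range (K + 1), x (k + 1) - xμ‖ ^ ξ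
        ≤ ((K : ℝ) + 1)⁻¹ * ∑ k ∈ range (K + 1), c * ‖x (k + 1) - xμ‖ ^ ξ := by
          rw [← mul_sum, mul_left_comm]; exact mul_le_mul_of_nonneg_left hjensen hc.le
      _ ≤ ((K : ℝ) + 1)⁻¹ * ∑ k ∈ range (K + 1), ⟪F (x (k + 1)) - F xμ, x (k + 1) - xμ⟫ := by
          gcongr with k; exact hgap k
      _ ≤ Δ / (K + 1) := by
          rw [← div_eq_inv_mul, div_le_div_iff_of_pos_right hK]; nlinarith
  · have hlast := hD ▸ htraj.inner_le_div_sqrt hβ.le hmono hKKT K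
    calc c * ‖x (K + 1) - xμ‖ ^ ξ ≤ ⟪F (x (K + 1)) - F xμ, x (K + 1) - xμ⟫ := hgap K
      _ ≤ Δ / √(K + 1) := by
          rw [mul_div_assoc, mul_div_assoc] at hlast
          nlinarith
      _ ≤ Δ / (K + 1) + 2 * Δ / √(K + 1) := by
          have : 0 ≤ Δ / (K + 1) := by positivity
          have : Δ / √(K + 1) ≤ 2 * Δ / √(K + 1) := by gcongr; linarith
          linarith
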